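/- arXiv:2601.15403 — 5 statements merged into one kernel-verified Lean document; each statement's English description precedes it below -/
import Mathlib

section
/- Let p be a prime, let k be a field of characteristic p, and let a, b, c be distinct elements of {1,…,n}. Then in R, the element (f_{a,b}·f_{b,c})^{p−1} − (x_b·y_b·f_{a,c})^{p−1} lies in the ideal (x_b^p, y_b^p) of R. -/
/-!
Write `x, y` for `x_b, y_b`. In characteristic `p` one has
`(u - v)^(p-1) = ∑_{i<p} u^i v^(p-1-i)`, since multiplying by `u - v` gives `u^p - v^p = (u - v)^p`.
Expanding both factors of `(f_{a,b} f_{b,c})^(p-1)` this way gives a double sum over `i, j < p`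
whose `(i, j)` term is divisible by `x^(p-1-i+j) y^(p-1-j+i)`. Off the diagonal one of these
exponents is at least `p`, and the diagonal sums to `(x y f_{a,c})^(p-1)`, again by the identity.
-/

open MvPolynomial

noncomputable section

namespace BEI

/-- The polynomial ring `k[x_1,…,x_n,y_1,…,y_n]`: variables `Sum.inl i` are the `x_i`,
variables `Sum.inr i` are the `y_i`. -/
abbrev Ring' (k : Type*) [CommRing k] (n : ℕ) : Type _ := MvPolynomial (Fin n ⊕ Fin n) k

variable {k : Type*} [CommRing k] {n : ℕ}

/-- The variable `x_i`. -/
def xv (i : Fin n) : Ring' k n := X (Sum.inl i)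

/-- The variable `y_i`. -/
def yv (i : Fin n) : Ring' k n := X (Sum.inr i)

/-- The binomial `f_{i,j} = x_i y_j - x_j y_i`. -/
def fb (i j : Fin n) : Ring' k n := xv i * yv j - xv j * yv i

section

variable {S : Type*} [CommRing S]

theorem sub_pow_pred_eq_geom_sum₂ [IsDomain S] {p : ℕ} (hp : p.Prime) [CharP S p] (u v : S) :
    (u - v) ^ (p - 1) = ∑ i ∈ Finset.range p, u ^ i * v ^ (p - 1 - i) := by
  have hp1 := hp.one_lt
  by_cases huv : u = v
  · subst huv
    have hterm : ∀ i ∈ Finset.range p, u ^ i * u ^ (p - 1 - i) = u ^ (p - 1) := fun i hi => by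
      rw [← pow_add, Nat.add_sub_cancel' (Nat.le_sub_one_of_lt (Finset.mem_range.mp hi))]
    rw [sub_self, zero_pow (by omega), Finset.sum_congr rfl hterm, Finset.sum_const,
      Finset.card_range, nsmul_eq_mul, CharP.cast_eq_zero, zero_mul]
  · have := Fact.mk hp
    apply mul_right_cancel₀ (sub_ne_zero.mpr huv)
    rw [← pow_succ, Nat.sub_add_cancel hp1.le, sub_pow_char, geom_sum₂_mul]

theorem Ideal.sum_mul_sum_sub_sum_mem {ι : Type*} (I : Ideal S) (s : Finset ι) (f g : ι → S)
    (h : ∀ i ∈ s, ∀ j ∈ s, i ≠ j → f i * g j ∈ I) :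
    (∑ i ∈ s, f i) * (∑ j ∈ s, g j) - ∑ i ∈ s, f i * g i ∈ I := by
  classical
  rw [Finset.sum_mul_sum, ← Finset.sum_sub_distrib]
  refine I.sum_mem fun i hi => ?_
  rw [← Finset.add_sum_erase s _ hi, add_sub_cancel_left]
  exact I.sum_mem fun j hj => h i hi j (Finset.mem_of_mem_erase hj) (Finset.ne_of_mem_erase hj).symm

theorem pow_mul_pow_mem_span_pow_pow {x y : S} {p l m : ℕ} (h : p ≤ l ∨ p ≤ m) :
    x ^ l * y ^ m ∈ Ideal.span {x ^ p, y ^ p} := by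
  rcases h with hl | hm
  · rw [← Nat.add_sub_cancel' hl, pow_add, mul_assoc]
    exact Ideal.mul_mem_right _ _ (Ideal.subset_span (by simp))
  · rw [← Nat.add_sub_cancel' hm, pow_add, mul_left_comm]
    exact Ideal.mul_mem_right _ _ (Ideal.subset_span (by simp))

theorem switching_terms_of_isDomain [IsDomain S] {p : ℕ} (hp : p.Prime) [CharP S p]
    (x y xa ya xc yc : S) :
    ((xa * y - x * ya) * (x * yc - xc * y)) ^ (p - 1) - (x * y * (xa * yc - xc * ya)) ^ (p - 1)
      ∈ Ideal.span {x ^ p, y ^ p} := by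
  have hdiag : ∀ i ∈ Finset.range p,
      (xa * y) ^ i * (x * ya) ^ (p - 1 - i) * ((x * yc) ^ i * (xc * y) ^ (p - 1 - i)) =
        (x * y) ^ (p - 1) * ((xa * yc) ^ i * (xc * ya) ^ (p - 1 - i)) := fun i hi => by
    obtain ⟨m, hm⟩ := Nat.exists_eq_add_of_le (Nat.le_sub_one_of_lt (Finset.mem_range.mp hi))
    rw [hm, Nat.add_sub_cancel_left]
    ring
  rw [mul_pow, mul_pow, sub_pow_pred_eq_geom_sum₂ hp, sub_pow_pred_eq_geom_sum₂ hp,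
    sub_pow_pred_eq_geom_sum₂ hp, Finset.mul_sum _ _ ((x * y) ^ (p - 1)),
    ← Finset.sum_congr rfl hdiag]
  refine Ideal.sum_mul_sum_sub_sum_mem _ _ _ _ fun i hi j hj hij => ?_
  have hexp : p ≤ p - 1 - i + j ∨ p ≤ i + (p - 1 - j) := by
    simp only [Finset.mem_range] at hi hj
    omega
  have hsplit : (xa * y) ^ i * (x * ya) ^ (p - 1 - i) * ((x * yc) ^ j * (xc * y) ^ (p - 1 - j)) =
      x ^ (p - 1 - i + j) * y ^ (i + (p - 1 - j)) *
        (xa ^ i * ya ^ (p - 1 - i) * yc ^ j * xc ^ (p - 1 - j)) := by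
    ring
  rw [hsplit]
  exact Ideal.mul_mem_right _ _ (pow_mul_pow_mem_span_pow_pow hexp)

end

theorem switching_terms_general (p : ℕ) (hp : p.Prime) (k : Type*) [Field k] [CharP k p]
    (n : ℕ) (a b c : Fin n) :
    (fb (k := k) a b * fb b c) ^ (p - 1) - (xv (k := k) b * yv b * fb a c) ^ (p - 1)
      ∈ Ideal.span {xv (k := k) b ^ p, yv (k := k) b ^ p} := by
  simpa only [fb] using switching_terms_of_isDomain hp (xv b) (yv b) (xv a) (yv a) (xv c) (yv c)

/-- if `char k = p` and `a, b, c` are distinct, then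
`(f_{a,b} f_{b,c})^{p-1} - (x_b y_b f_{a,c})^{p-1} ∈ (x_b^p, y_b^p)`. -/
theorem switching_terms (p : ℕ) (hp : p.Prime) (k : Type*) [Field k] [CharP k p]
    (n : ℕ) (a b c : Fin n) (hab : a ≠ b) (hbc : b ≠ c) (hac : a ≠ c) :
    (fb (k := k) a b * fb b c) ^ (p - 1) - (xv (k := k) b * yv b * fb a c) ^ (p - 1)
      ∈ Ideal.span {xv (k := k) b ^ p, yv (k := k) b ^ p} :=
  switching_terms_general p hp k n a b c

end BEI
end
end

section
/- Let p be a prime and k a field of characteristic p, with n = 3. Then (f_{1,2}·f_{2,3}·f_{1,3})^{p−1} ∈ m^{[p]}, i.e., the (p−1)-st power of the product of the three 2×2 minors of the generic 2×3 matrix lies in the ideal (x_1^p, x_2^p, x_3^p, y_1^p, y_2^p, y_3^p). -/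
/-!
In characteristic `p` one has `(a - b) ^ (p - 1) = ∑_{i < p} a ^ i b ^ (p - 1 - i)`. Expanding
`f₁₂ ^ (p - 1) f₂₃ ^ (p - 1)` this way, a term in which the exponents of `x₂` and `y₂` differ is
divisible by `x₂ ^ p` or `y₂ ^ p`, and the remaining terms add up to `(x₂ y₂) ^ (p - 1) f₁₃ ^ (p - 1)`.
So modulo `m^[p]` the product equals `(x₂ y₂) ^ (p - 1) f₁₃ ^ (p - 2) f₁₃ ^ p`, and `f₁₃ ^ p ∈ m^[p]`
because `f₁₃ ∈ m`.
-/

open MvPolynomial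

noncomputable section

namespace BEI

variable {k : Type*} [CommRing k] {n : ℕ}

/-- The Frobenius power `I^{[p]}`, the ideal generated by the `p`-th powers of all
elements of `I`. -/
def frobPow {A : Type*} [CommSemiring A] (I : Ideal A) (p : ℕ) : Ideal A :=
  Ideal.span ((· ^ p) '' (I : Set A))

/-- The graded maximal ideal `m = (x_1,…,x_n,y_1,…,y_n)`. -/
def maxIdeal (k : Type*) [CommRing k] (n : ℕ) : Ideal (Ring' k n) :=
  Ideal.span (Set.range (X : (Fin n ⊕ Fin n) → Ring' k n))

section CharP

variable {R : Type*} [CommRing R] {p : ℕ}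

lemma sub_pow_char_sub_one [IsDomain R] [Fact p.Prime] [CharP R p] (a b : R) :
    (a - b) ^ (p - 1) = ∑ i ∈ Finset.range p, a ^ i * b ^ (p - 1 - i) := by
  have hp := (Fact.out : p.Prime)
  by_cases hab : a = b
  · subst hab
    have hsum : ∑ i ∈ Finset.range p, a ^ i * a ^ (p - 1 - i) = p • a ^ (p - 1) := by
      rw [← Finset.card_range p, ← Finset.sum_const, Finset.card_range]
      exact Finset.sum_congr rfl fun i hi => by
        rw [← pow_add, Nat.add_sub_cancel' (by have := Finset.mem_range.mp hi; omega)]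
    rw [sub_self, zero_pow (by have := hp.two_le; omega), hsum, nsmul_eq_mul,
      CharP.cast_eq_zero, zero_mul]
  · apply mul_right_cancel₀ (sub_ne_zero.mpr hab)
    rw [geom_sum₂_mul, ← pow_succ, Nat.sub_add_cancel hp.pos, sub_pow_char]

lemma sub_pow_char_sub_one_mul_smodEq [IsDomain R] [Fact p.Prime] [CharP R p] {I : Ideal R}
    {s t : R} (hs : s ^ p ∈ I) (ht : t ^ p ∈ I) (a b c d : R) :
    (a * t - s * b) ^ (p - 1) * (s * c - d * t) ^ (p - 1)
      ≡ (s * t) ^ (p - 1) * (a * c - d * b) ^ (p - 1) [SMOD I] := by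
  rw [SModEq.idealQuotientMk, sub_pow_char_sub_one, sub_pow_char_sub_one, sub_pow_char_sub_one,
    Finset.sum_mul_sum, Finset.mul_sum, map_sum, map_sum]
  refine Finset.sum_congr rfl fun i hi => ?_
  have hip : i < p := Finset.mem_range.mp hi
  rw [map_sum, Finset.sum_eq_single i]
  · obtain ⟨m, hm⟩ : ∃ m, p - 1 = i + m := ⟨p - 1 - i, by omega⟩
    congr 1
    simp only [hm, Nat.add_sub_cancel_left]
    ring
  · intro j hj hji
    have hjp : j < p := Finset.mem_range.mp hj
    rw [Ideal.Quotient.eq_zero_iff_mem]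
    rcases Nat.lt_or_gt_of_ne hji with hlt | hgt
    · refine I.mem_of_dvd (dvd_trans (pow_dvd_pow t (by omega : p ≤ i + (p - 1 - j)))
        (Dvd.intro (a ^ i * (s * b) ^ (p - 1 - i) * (s * c) ^ j * d ^ (p - 1 - j)) ?_)) ht
      ring
    · refine I.mem_of_dvd (dvd_trans (pow_dvd_pow s (by omega : p ≤ (p - 1 - i) + j))
        (Dvd.intro ((a * t) ^ i * b ^ (p - 1 - i) * c ^ j * (d * t) ^ (p - 1 - j)) ?_)) hs
      ring
  · exact fun h => absurd hi h

end CharP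

lemma pow_mem_frobPow {A : Type*} [CommSemiring A] {I : Ideal A} {a : A} (ha : a ∈ I) (p : ℕ) :
    a ^ p ∈ frobPow I p :=
  Ideal.subset_span ⟨a, ha, rfl⟩

lemma X_mem_maxIdeal (v : Fin n ⊕ Fin n) : (X v : Ring' k n) ∈ maxIdeal k n :=
  Ideal.subset_span (Set.mem_range_self v)

lemma fb_mem_maxIdeal (i j : Fin n) : fb (k := k) i j ∈ maxIdeal k n :=
  sub_mem (Ideal.mul_mem_right _ _ (X_mem_maxIdeal _)) (Ideal.mul_mem_right _ _ (X_mem_maxIdeal _))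

lemma fb_pow_mul_fb_pow_smodEq [IsDomain k] {p : ℕ} [Fact p.Prime] [CharP k p] (i j l : Fin n) :
    fb i j ^ (p - 1) * fb j l ^ (p - 1)
      ≡ (xv j * yv j) ^ (p - 1) * fb (k := k) i l ^ (p - 1) [SMOD frobPow (maxIdeal k n) p] :=
  sub_pow_char_sub_one_mul_smodEq (pow_mem_frobPow (X_mem_maxIdeal _) p)
    (pow_mem_frobPow (X_mem_maxIdeal _) p) _ _ _ _

/-- with `n = 3` and `char k = p`, the `(p-1)`-st power of the product of
the three `2 × 2` minors of the generic `2 × 3` matrix lies in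
`m^{[p]} = (x_1^p, x_2^p, x_3^p, y_1^p, y_2^p, y_3^p)`. -/
theorem minors_power_in_frobenius (p : ℕ) (hp : p.Prime) (k : Type*) [Field k] [CharP k p] :
    (fb (k := k) (0 : Fin 3) 1 * fb (1 : Fin 3) 2 * fb (0 : Fin 3) 2) ^ (p - 1)
      ∈ frobPow (maxIdeal k 3) p := by
  have : Fact p.Prime := ⟨hp⟩
  obtain ⟨q, rfl⟩ : ∃ q, p = q + 2 := ⟨p - 2, (Nat.sub_add_cancel hp.two_le).symm⟩
  have hf02 := pow_mem_frobPow (fb_mem_maxIdeal (k := k) (0 : Fin 3) 2) (q + 2)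
  rw [← SModEq.zero]
  calc (fb (0 : Fin 3) 1 * fb 1 2 * fb 0 2) ^ (q + 2 - 1)
      = fb (0 : Fin 3) 1 ^ (q + 1) * fb 1 2 ^ (q + 1) * fb (k := k) 0 2 ^ (q + 1) := by
        rw [show q + 2 - 1 = q + 1 by omega, mul_pow, mul_pow]
    _ ≡ (xv 1 * yv 1) ^ (q + 1) * fb 0 2 ^ (q + 1) * fb 0 2 ^ (q + 1)
        [SMOD frobPow (maxIdeal k 3) (q + 2)] :=
      (fb_pow_mul_fb_pow_smodEq (p := q + 2) 0 1 2).mul SModEq.rfl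
    _ = (xv 1 * yv 1) ^ (q + 1) * fb 0 2 ^ q * fb 0 2 ^ (q + 2) := by ring
    _ ≡ 0 [SMOD frobPow (maxIdeal k 3) (q + 2)] :=
      SModEq.zero.mpr (Ideal.mul_mem_left _ _ hf02)

end BEI
end
end

section
/- Let p be a prime and k = ℤ/pℤ. Let G be a finite simple graph on {1,…,n}, let W ⊆ {1,…,n}, and let H be the induced subgraph of G on W. Set R_G = k[x_1,…,x_n,y_1,…,y_n]/J_G and R_H = k[{x_i, y_i : i ∈ W}]/J_H. If R_G admits an F-splitting, then R_H admits an F-splitting. -/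
/-!
An F-splitting descends along a ring retract `S → T → S`: conjugate it by the two maps.
The quotient by `J_{G[W]}` is such a retract of the quotient by `J_G`: the inclusion is induced
by renaming variables along `W ↪ V`, and the retraction by sending the variables of vertices
outside `W` to `0`, which kills every generator of `J_G` at an edge leaving `W`.
-/

open MvPolynomial

noncomputable section

namespace BEI

/-- The binomial edge ideal `J_G` of a graph `G` on a vertex type `V`, inside the
polynomial ring on variables `x_v` (`= X (Sum.inl v)`) and `y_v` (`= X (Sum.inr v)`). -/
def beIdealV {k : Type*} [CommRing k] {V : Type*} (G : SimpleGraph V) :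
    Ideal (MvPolynomial (V ⊕ V) k) :=
  Ideal.span {g | ∃ i j, G.Adj i j ∧
    g = X (Sum.inl i) * X (Sum.inr j) - X (Sum.inl j) * X (Sum.inr i)}

/-- `φ` is an F-splitting of the characteristic-`p` ring `T`: `φ` is additive, satisfies
`φ (a^p • b) = a • φ b`, and splits the Frobenius: `φ (r^p) = r`. -/
structure IsFSplitting (p : ℕ) {T : Type*} [CommRing T] (φ : T → T) : Prop where
  map_add : ∀ a b : T, φ (a + b) = φ a + φ b
  semilinear : ∀ a b : T, φ (a ^ p * b) = a * φ b
  splits : ∀ r : T, φ (r ^ p) = r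

theorem IsFSplitting.comp_retract {p : ℕ} {S T : Type*} [CommRing S] [CommRing T]
    {φ : T → T} (hφ : IsFSplitting p φ) (ι : S →+* T) (π : T →+* S)
    (hπι : Function.LeftInverse π ι) : IsFSplitting p (π ∘ φ ∘ ι) where
  map_add a b := by simp only [Function.comp_apply, _root_.map_add, hφ.map_add]
  semilinear a b := by simp only [Function.comp_apply, map_mul, map_pow, hφ.semilinear, hπι a]
  splits r := by simp only [Function.comp_apply, map_pow, hφ.splits, hπι r]

section Restriction

variable {k : Type*} [CommRing k] {V : Type*}

theorem map_rename_beIdealV_le {U : Type*} {H : SimpleGraph U} {G : SimpleGraph V}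
    (f : H →g G) :
    (beIdealV (k := k) H).map (rename (Sum.map f f)) ≤ beIdealV G := by
  rw [beIdealV, Ideal.map_span, Ideal.span_le]
  rintro _ ⟨_, ⟨i, j, hij, rfl⟩, rfl⟩
  exact Ideal.subset_span ⟨f i, f j, f.map_adj hij, by simp⟩

open Classical in
variable (k) in
def restrictVars (W : Set V) : V ⊕ V → MvPolynomial (W ⊕ W) k :=
  Sum.elim (fun v => if h : v ∈ W then X (Sum.inl ⟨v, h⟩) else 0)
    (fun v => if h : v ∈ W then X (Sum.inr ⟨v, h⟩) else 0)

theorem aeval_restrictVars_rename_val (W : Set V) (a : MvPolynomial (W ⊕ W) k) :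
    aeval (restrictVars k W) (rename (Sum.map Subtype.val Subtype.val) a) = a := by
  have hX : restrictVars k W ∘ Sum.map Subtype.val Subtype.val = X := by
    funext v
    rcases v with v | v <;> simp [restrictVars]
  rw [aeval_rename, hX, aeval_X_left_apply]

theorem map_aeval_restrictVars_beIdealV_le (G : SimpleGraph V) (W : Set V) :
    (beIdealV (k := k) G).map (aeval (restrictVars k W)) ≤ beIdealV (G.induce W) := by
  rw [beIdealV, Ideal.map_span, Ideal.span_le]
  rintro _ ⟨_, ⟨i, j, hij, rfl⟩, rfl⟩
  by_cases hi : i ∈ W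
  · by_cases hj : j ∈ W
    · exact Ideal.subset_span ⟨⟨i, hi⟩, ⟨j, hj⟩, hij, by simp [restrictVars, hi, hj]⟩
    · simp [restrictVars, hj]
  · simp [restrictVars, hi]

variable (k)

def inducedInclusion (G : SimpleGraph V) (W : Set V) :
    MvPolynomial (W ⊕ W) k ⧸ beIdealV (G.induce W) →+* MvPolynomial (V ⊕ V) k ⧸ beIdealV G :=
  Ideal.quotientMap _ (rename (Sum.map Subtype.val Subtype.val)).toRingHom
    (Ideal.map_le_iff_le_comap.mp (map_rename_beIdealV_le (SimpleGraph.Embedding.induce W).toHom))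

def inducedRestriction (G : SimpleGraph V) (W : Set V) :
    MvPolynomial (V ⊕ V) k ⧸ beIdealV G →+* MvPolynomial (W ⊕ W) k ⧸ beIdealV (G.induce W) :=
  Ideal.quotientMap _ (aeval (restrictVars k W)).toRingHom
    (Ideal.map_le_iff_le_comap.mp (map_aeval_restrictVars_beIdealV_le G W))

theorem inducedRestriction_leftInverse (G : SimpleGraph V) (W : Set V) :
    Function.LeftInverse (inducedRestriction k G W) (inducedInclusion k G W) := by
  intro a
  obtain ⟨a, rfl⟩ := Ideal.Quotient.mk_surjective a
  simp only [inducedInclusion, inducedRestriction, Ideal.quotientMap_mk, AlgHom.toRingHom_eq_coe,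
    AlgHom.coe_toRingHom, aeval_restrictVars_rename_val]

end Restriction

theorem F_split_induced_subgraph_general (p : ℕ) (n : ℕ)
    (G : SimpleGraph (Fin n)) (W : Set (Fin n))
    (h : ∃ φ : (MvPolynomial (Fin n ⊕ Fin n) (ZMod p) ⧸ beIdealV (k := ZMod p) G) →
        (MvPolynomial (Fin n ⊕ Fin n) (ZMod p) ⧸ beIdealV (k := ZMod p) G),
      IsFSplitting p φ) :
    ∃ φ : (MvPolynomial (↥W ⊕ ↥W) (ZMod p) ⧸ beIdealV (k := ZMod p) (G.induce W)) →
        (MvPolynomial (↥W ⊕ ↥W) (ZMod p) ⧸ beIdealV (k := ZMod p) (G.induce W)),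
      IsFSplitting p φ := by
  obtain ⟨φ, hφ⟩ := h
  exact ⟨_, hφ.comp_retract _ _ (inducedRestriction_leftInverse (ZMod p) G W)⟩

/-- over `k = ℤ/pℤ`, if the quotient by the binomial edge ideal of `G`
admits an F-splitting, then so does the quotient by the binomial edge ideal of any
induced subgraph `H = G[W]`. -/
theorem F_split_induced_subgraph (p : ℕ) (hp : p.Prime) (n : ℕ)
    (G : SimpleGraph (Fin n)) (W : Set (Fin n))
    (h : ∃ φ : (MvPolynomial (Fin n ⊕ Fin n) (ZMod p) ⧸ beIdealV (k := ZMod p) G) →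
        (MvPolynomial (Fin n ⊕ Fin n) (ZMod p) ⧸ beIdealV (k := ZMod p) G),
      IsFSplitting p φ) :
    ∃ φ : (MvPolynomial (↥W ⊕ ↥W) (ZMod p) ⧸ beIdealV (k := ZMod p) (G.induce W)) →
        (MvPolynomial (↥W ⊕ ↥W) (ZMod p) ⧸ beIdealV (k := ZMod p) (G.induce W)),
      IsFSplitting p φ :=
  F_split_induced_subgraph_general p n G W h

end BEI
end
end

section
/- Let k be a field of characteristic 2. Fix distinct a, b, c ∈ {1,…,n}, a subset A ⊆ {1,…,n}∖{a,b,c}, and a subset B ⊆ {1,…,n}∖(A ∪ {b}). Let G be a finite simple graph on {1,…,n} such that: every vertex k ∈ A is adjacent to b; every vertex k ∈ A is adjacent to a or to c; and every edge of G has at least one endpoint in A. Then P(A,B)^{[2]} : J_G = P(A,B)^{[2]} + (ω_A). -/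
open MvPolynomial

noncomputable section

namespace BEI

variable {k : Type*} [CommRing k] {n : ℕ}

/-- The binomial edge ideal `J_G` of a graph `G` on `{1,…,n}`. -/
def beIdeal (G : SimpleGraph (Fin n)) : Ideal (Ring' k n) :=
  Ideal.span {g | ∃ i j, G.Adj i j ∧ g = fb i j}

/-- The ideal `P(A,B)`, generated by `{x_i, y_i : i ∈ A}` together with all `f_{a,b}` for
distinct `a, b ∈ B`. -/
def PAB (A B : Finset (Fin n)) : Ideal (Ring' k n) :=
  Ideal.span
    ({g | ∃ i ∈ A, g = xv i ∨ g = yv i} ∪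
      {g | ∃ a ∈ B, ∃ b ∈ B, a ≠ b ∧ g = fb a b})

/-- The monomial `ω_A = ∏_{i ∈ A} x_i y_i`. -/
def omegaA (A : Finset (Fin n)) : Ring' k n := ∏ i ∈ A, (xv i * yv i)

/-!
In characteristic `2` the ideal `Q = P(A,B)^{[2]}` is generated by the monomials `x_i², y_i²`
(`i ∈ A`) and the binomials `f_{u,v}² = x_u² y_v² - x_v² y_u²` (`u, v ∈ B`). Hence `g ∈ Q` iff,
for every exponent vector `m` with exponents `≤ 1` on the variables of `A`, the coefficients of
`g` on the class of `m` under the moves `x_u² y_v² ↔ x_v² y_u²` add up to zero. From this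
criterion, `Q` is unchanged by cancelling a monomial free of the variables of `A`, and then also
by cancelling `f_{b,e}` with `b ∉ A ∪ B`.

The inclusion `⊇` holds because `ω_A f_{i,j} ∈ Q` as soon as `i ∈ A`. For `⊆` induct on `A`:
split `g` by its bidegree in `(x_i, y_i)`. The conditions `f_{i,b} g, f_{i,e} g ∈ Q` force the
components of bidegrees `(0,0), (1,0), (0,1)` into `P(A∖i, B)^{[2]}`, the components of higher
bidegree lie in `(x_i², y_i²)`, and the `(1,1)`-component is `x_i y_i δ` where `δ` satisfies the
hypotheses for `A ∖ i`.
-/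

end BEI

namespace MvPolynomial

variable {R M σ : Type*} [CommSemiring R]

theorem monomial_one_dvd_of_forall_le {s : σ →₀ ℕ} {p : MvPolynomial σ R}
    (h : ∀ m ∈ p.support, s ≤ m) : monomial s 1 ∣ p := by
  rw [p.as_sum]
  exact Finset.dvd_sum fun m hm => monomial_dvd_monomial.mpr ⟨.inr (h m hm), one_dvd _⟩

theorem support_monomial_mul_subset [DecidableEq σ] (s : σ →₀ ℕ) (c : R)
    (p : MvPolynomial σ R) : (monomial s c * p).support ⊆ p.support.image (s + ·) := by
  intro m hm
  obtain ⟨s', hs', m', hm', rfl⟩ := Finset.mem_add.mp (support_mul _ _ hm)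
  rw [Finset.mem_singleton.mp (support_monomial_subset hs')]
  exact Finset.mem_image_of_mem _ hm'

section WeightedHomogeneousComponent

attribute [local instance] weightedGradedAlgebra

variable {w : σ → M} {φ : MvPolynomial σ R} {i j d : M}

theorem weightedHomogeneousComponent_mul_of_add_eq [AddCancelCommMonoid M]
    (hφ : IsWeightedHomogeneous w φ i) (h : i + j = d) (ψ : MvPolynomial σ R) :
    weightedHomogeneousComponent w d (φ * ψ) = φ * weightedHomogeneousComponent w j ψ := by
  classical
  subst h
  simpa [← weightedDecomposition.decompose'_apply] using
    DirectSum.coe_decompose_mul_add_of_left_mem (weightedHomogeneousSubmodule R w) (j := j)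
      (b := ψ) hφ

theorem weightedHomogeneousComponent_mul_of_not_le [AddCommMonoid M] [PartialOrder M]
    [CanonicallyOrderedAdd M] (hφ : IsWeightedHomogeneous w φ i) (h : ¬ i ≤ d)
    (ψ : MvPolynomial σ R) :
    weightedHomogeneousComponent w d (φ * ψ) = 0 := by
  classical
  simpa [← weightedDecomposition.decompose'_apply] using
    DirectSum.coe_decompose_mul_of_left_mem_of_not_le (weightedHomogeneousSubmodule R w)
      (b := ψ) hφ h

end WeightedHomogeneousComponent

end MvPolynomial

namespace BEI

section Frobenius

variable {R : Type*} [CommSemiring R] {p : ℕ}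

theorem pow_mem_frobPow_s11 {I : Ideal R} {x : R} (hx : x ∈ I) : x ^ p ∈ frobPow I p :=
  Ideal.subset_span ⟨x, hx, rfl⟩

theorem frobPow_span [ExpChar R p] (s : Set R) :
    frobPow (Ideal.span s) p = Ideal.span ((· ^ p) '' s) :=
  Ideal.map_span (frobenius R p) s

end Frobenius

variable {k : Type*} [CommRing k] {n : ℕ}

abbrev Mon (n : ℕ) := Fin n ⊕ Fin n →₀ ℕ

def ex (i : Fin n) : Mon n := Finsupp.single (.inl i) 1

def ey (i : Fin n) : Mon n := Finsupp.single (.inr i) 1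

@[simp] theorem ex_inl (i j : Fin n) : ex i (.inl j) = if i = j then 1 else 0 := by
  simp [ex, Finsupp.single_apply]

@[simp] theorem ex_inr (i j : Fin n) : ex i (.inr j) = 0 := by simp [ex]

@[simp] theorem ey_inl (i j : Fin n) : ey i (.inl j) = 0 := by simp [ey]

@[simp] theorem ey_inr (i j : Fin n) : ey i (.inr j) = if i = j then 1 else 0 := by
  simp [ey, Finsupp.single_apply]

theorem xv_mul_yv (i j : Fin n) : (xv i * yv j : Ring' k n) = monomial (ex i + ey j) 1 := by
  rw [xv, yv, X, X, monomial_mul, one_mul, ex, ey]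

theorem fb_eq (i j : Fin n) :
    (fb i j : Ring' k n) = monomial (ex i + ey j) 1 - monomial (ex j + ey i) 1 := by
  rw [fb, xv_mul_yv, xv_mul_yv]

theorem fb_sq [CharP k 2] (i j : Fin n) :
    (fb i j : Ring' k n) ^ 2
      = monomial (2 • (ex i + ey j)) 1 - monomial (2 • (ex j + ey i)) 1 := by
  rw [fb_eq, sub_pow_char, monomial_pow, monomial_pow, one_pow]

variable {A B : Finset (Fin n)}

theorem xv_sq_mem {i : Fin n} (hi : i ∈ A) : xv i ^ 2 ∈ frobPow (PAB (k := k) A B) 2 :=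
  pow_mem_frobPow_s11 (Ideal.subset_span (.inl ⟨i, hi, .inl rfl⟩))

theorem yv_sq_mem {i : Fin n} (hi : i ∈ A) : yv i ^ 2 ∈ frobPow (PAB (k := k) A B) 2 :=
  pow_mem_frobPow_s11 (Ideal.subset_span (.inl ⟨i, hi, .inr rfl⟩))

theorem fb_sq_mem {u v : Fin n} (hu : u ∈ B) (hv : v ∈ B) (huv : u ≠ v) :
    fb u v ^ 2 ∈ frobPow (PAB (k := k) A B) 2 :=
  pow_mem_frobPow_s11 (Ideal.subset_span (.inr ⟨u, hu, v, hv, huv, rfl⟩))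

theorem frobPow_PAB_mono {A A' : Finset (Fin n)} (h : A ⊆ A') :
    frobPow (PAB (k := k) A B) 2 ≤ frobPow (PAB A' B) 2 :=
  Ideal.span_mono <| Set.image_mono <| Ideal.span_mono <|
    Set.union_subset_union_left _ fun _ ⟨i, hi, hg⟩ => ⟨i, h hi, hg⟩

theorem omegaA_insert {i : Fin n} (hi : i ∉ A) :
    omegaA (k := k) (insert i A) = xv i * yv i * omegaA A :=
  Finset.prod_insert hi

theorem omegaA_mul_fb_mem {i j : Fin n} (h : i ∈ A ∨ j ∈ A) :
    omegaA A * fb i j ∈ frobPow (PAB (k := k) A B) 2 := by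
  wlog hi : i ∈ A generalizing i j
  · have hswap : (fb i j : Ring' k n) = -fb j i := by simp only [fb]; ring
    rw [hswap, mul_neg]
    exact neg_mem (this h.symm (h.resolve_left hi))
  rw [omegaA, ← Finset.mul_prod_erase A _ hi]
  have : (xv i * yv i * fb i j : Ring' k n)
      = yv i * yv j * xv i ^ 2 - xv i * xv j * yv i ^ 2 := by
    rw [fb]; ring
  rw [mul_comm (xv i * yv i), mul_assoc, this]
  exact Ideal.mul_mem_left _ _ (sub_mem (Ideal.mul_mem_left _ _ (xv_sq_mem hi))
    (Ideal.mul_mem_left _ _ (yv_sq_mem hi)))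

/-- The invariants of the moves `x_u² y_v² ↦ x_v² y_u²` (`u, v ∈ B`) between the two terms of
`f_{u,v}²` in characteristic `2`. Vectors sharing them are linked by such moves, which is what
`monomial_sub_monomial_mem` proves. -/
structure SwapEquiv (B : Finset (Fin n)) (m m' : Mon n) : Prop where
  inl_eq : ∀ i ∉ B, m (.inl i) = m' (.inl i)
  inr_eq : ∀ i ∉ B, m (.inr i) = m' (.inr i)
  add_eq : ∀ u ∈ B, m (.inl u) + m (.inr u) = m' (.inl u) + m' (.inr u)
  mod_two_eq : ∀ u ∈ B, m (.inl u) % 2 = m' (.inl u) % 2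
  sum_eq : ∑ u ∈ B, m (.inl u) = ∑ u ∈ B, m' (.inl u)

namespace SwapEquiv

variable {m m' m'' w : Mon n}

@[refl] theorem refl (m : Mon n) : SwapEquiv B m m :=
  ⟨fun _ _ => rfl, fun _ _ => rfl, fun _ _ => rfl, fun _ _ => rfl, rfl⟩

@[symm] theorem symm (h : SwapEquiv B m m') : SwapEquiv B m' m :=
  ⟨fun i hi => (h.inl_eq i hi).symm, fun i hi => (h.inr_eq i hi).symm,
    fun u hu => (h.add_eq u hu).symm, fun u hu => (h.mod_two_eq u hu).symm, h.sum_eq.symm⟩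

@[trans] theorem trans (h : SwapEquiv B m m') (h' : SwapEquiv B m' m'') : SwapEquiv B m m'' :=
  ⟨fun i hi => (h.inl_eq i hi).trans (h'.inl_eq i hi),
    fun i hi => (h.inr_eq i hi).trans (h'.inr_eq i hi),
    fun u hu => (h.add_eq u hu).trans (h'.add_eq u hu),
    fun u hu => (h.mod_two_eq u hu).trans (h'.mod_two_eq u hu), h.sum_eq.trans h'.sum_eq⟩

theorem add_right_iff : SwapEquiv B (m + w) (m' + w) ↔ SwapEquiv B m m' := by
  constructor
  · intro h
    refine ⟨fun i hi => ?_, fun i hi => ?_, fun u hu => ?_, fun u hu => ?_, ?_⟩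
    · have := h.inl_eq i hi; simp only [Finsupp.add_apply] at this; omega
    · have := h.inr_eq i hi; simp only [Finsupp.add_apply] at this; omega
    · have := h.add_eq u hu; simp only [Finsupp.add_apply] at this; omega
    · have := h.mod_two_eq u hu; simp only [Finsupp.add_apply] at this; omega
    · have := h.sum_eq; simp only [Finsupp.add_apply, Finset.sum_add_distrib] at this; omega
  · intro h
    refine ⟨fun i hi => ?_, fun i hi => ?_, fun u hu => ?_, fun u hu => ?_, ?_⟩
    · simp only [Finsupp.add_apply, h.inl_eq i hi]
    · simp only [Finsupp.add_apply, h.inr_eq i hi]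
    · have := h.add_eq u hu; simp only [Finsupp.add_apply]; omega
    · have := h.mod_two_eq u hu; simp only [Finsupp.add_apply]; omega
    · simp only [Finsupp.add_apply, Finset.sum_add_distrib, h.sum_eq]

theorem add_left_iff : SwapEquiv B (w + m) (w + m') ↔ SwapEquiv B m m' := by
  rw [add_comm w, add_comm w, add_right_iff]

theorem swap {u v : Fin n} (hu : u ∈ B) (hv : v ∈ B) (μ : Mon n) :
    SwapEquiv B (μ + 2 • (ex u + ey v)) (μ + 2 • (ex v + ey u)) := by
  rw [add_left_iff]
  refine ⟨fun i hi => ?_, fun i hi => ?_, fun t _ => ?_, fun t _ => ?_, ?_⟩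
  · have : u ≠ i := by rintro rfl; exact hi hu
    have : v ≠ i := by rintro rfl; exact hi hv
    simp [*]
  · have : u ≠ i := by rintro rfl; exact hi hu
    have : v ≠ i := by rintro rfl; exact hi hv
    simp [*]
  · simp only [Finsupp.smul_apply, Finsupp.add_apply, ex_inl, ex_inr, ey_inl, ey_inr]
    split_ifs <;> simp
  · simp only [Finsupp.smul_apply, Finsupp.add_apply, ex_inl, ey_inl]
    split_ifs <;> simp
  · simp [Finset.sum_ite_eq, hu, hv]

end SwapEquiv

def IsReduced (A : Finset (Fin n)) (m : Mon n) : Prop :=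
  ∀ i ∈ A, m (.inl i) ≤ 1 ∧ m (.inr i) ≤ 1

theorem IsReduced.mono {m m' : Mon n} (h : IsReduced A m') (hle : m ≤ m') : IsReduced A m :=
  fun i hi => ⟨(hle _).trans (h i hi).1, (hle _).trans (h i hi).2⟩

def excess (B : Finset (Fin n)) (m m' : Mon n) : ℕ := ∑ t ∈ B, (m (.inl t) - m' (.inl t))

namespace SwapEquiv

variable {m m' : Mon n}

theorem eq_of_excess_eq_zero (h : SwapEquiv B m m') (h0 : excess B m m' = 0) : m = m' := by
  have hle : ∀ t ∈ B, m (.inl t) ≤ m' (.inl t) := fun t ht =>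
    Nat.sub_eq_zero_iff_le.mp (Finset.sum_eq_zero_iff.mp h0 t ht)
  have hx : ∀ t ∈ B, m (.inl t) = m' (.inl t) :=
    (Finset.sum_eq_sum_iff_of_le hle).mp h.sum_eq
  ext (t | t) <;> by_cases ht : t ∈ B
  · exact hx t ht
  · exact h.inl_eq t ht
  · have := h.add_eq t ht; have := hx t ht; omega
  · exact h.inr_eq t ht

theorem exists_swap (h : SwapEquiv B m m') (hpos : 0 < excess B m m') :
    ∃ u ∈ B, ∃ v ∈ B, u ≠ v ∧ 2 • (ex u + ey v) ≤ m ∧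
      excess B (m - 2 • (ex u + ey v) + 2 • (ex v + ey u)) m' < excess B m m' := by
  obtain ⟨u, hu, hu'⟩ : ∃ u ∈ B, m' (.inl u) < m (.inl u) := by
    obtain ⟨u, hu, hpos⟩ := Finset.exists_lt_of_sum_lt (f := fun _ => 0)
      (by simpa [excess] using hpos)
    exact ⟨u, hu, by omega⟩
  obtain ⟨v, hv, hv'⟩ : ∃ v ∈ B, m (.inl v) < m' (.inl v) := by
    by_contra! hle
    exact (Finset.sum_lt_sum hle ⟨u, hu, hu'⟩).ne h.sum_eq.symm
  have huv : u ≠ v := by rintro rfl; omega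
  have := h.mod_two_eq u hu
  have := h.mod_two_eq v hv
  have := h.add_eq v hv
  refine ⟨u, hu, v, hv, huv, fun x => ?_, Finset.sum_lt_sum (fun t _ => ?_) ⟨u, hu, ?_⟩⟩
  · rcases x with t | t <;> simp only [Finsupp.smul_apply, Finsupp.add_apply, ex_inl, ex_inr,
      ey_inl, ey_inr] <;> split_ifs <;> simp_all <;> omega
  · simp only [Finsupp.add_apply, Finsupp.tsub_apply, Finsupp.smul_apply, ex_inl, ey_inl]
    split_ifs <;> simp_all <;> omega
  · simp only [Finsupp.add_apply, Finsupp.tsub_apply, Finsupp.smul_apply, ex_inl, ey_inl]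
    simp [Ne.symm huv]
    omega

theorem isReduced_iff {m m' : Mon n} (hAB : Disjoint A B) (h : SwapEquiv B m m') :
    IsReduced A m ↔ IsReduced A m' := by
  refine forall₂_congr fun i hi => ?_
  have hiB := Finset.disjoint_left.mp hAB hi
  rw [h.inl_eq i hiB, h.inr_eq i hiB]

end SwapEquiv

theorem monomial_sub_monomial_mem [CharP k 2] {m m' : Mon n} (h : SwapEquiv B m m') :
    monomial m (1 : k) - monomial m' 1 ∈ frobPow (PAB A B) 2 := by
  induction hE : excess B m m' using Nat.strong_induction_on generalizing m with
  | _ E ih =>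
  rcases Nat.eq_zero_or_pos E with h0 | hpos
  · rw [h.eq_of_excess_eq_zero (hE.trans h0), sub_self]
    exact zero_mem _
  obtain ⟨u, hu, v, hv, huv, hle, hlt⟩ := h.exists_swap (hE ▸ hpos)
  set μ := m - 2 • (ex u + ey v)
  have hμ : μ + 2 • (ex u + ey v) = m := tsub_add_cancel_of_le hle
  have hswap : monomial m (1 : k) - monomial (μ + 2 • (ex v + ey u)) 1
      = monomial μ 1 * fb u v ^ 2 := by
    rw [fb_sq, mul_sub, monomial_mul, monomial_mul, one_mul, hμ]
  have hrest := ih _ (hE ▸ hlt) ((SwapEquiv.swap hu hv μ).symm.trans (hμ ▸ h)) rfl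
  have := add_mem (Ideal.mul_mem_left _ (monomial μ 1) (fb_sq_mem (A := A) hu hv huv)) hrest
  rwa [← hswap, sub_add_sub_cancel] at this

theorem monomial_mem_of_not_isReduced {m : Mon n} (hm : ¬ IsReduced A m) (c : k) :
    monomial m c ∈ frobPow (PAB A B) 2 := by
  have key : ∀ v, 2 ≤ m v → X v ^ 2 ∈ frobPow (PAB (k := k) A B) 2 →
      monomial m c ∈ frobPow (PAB A B) 2 := fun v hv hX => by
    rw [← tsub_add_cancel_of_le (Finsupp.single_le_iff.mpr hv), ← mul_one c, ← monomial_mul,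
      ← X_pow_eq_monomial]
    exact Ideal.mul_mem_left _ _ hX
  simp only [IsReduced, not_forall, not_and_or, not_le] at hm
  obtain ⟨i, hi, hx | hy⟩ := hm
  · exact key _ hx (xv_sq_mem hi)
  · exact key _ hy (yv_sq_mem hi)

open Classical in
def classCoeff (B : Finset (Fin n)) (g : Ring' k n) (m : Mon n) : k :=
  ∑ m' ∈ g.support with SwapEquiv B m' m, coeff m' g

def IsBalanced (A B : Finset (Fin n)) (g : Ring' k n) : Prop :=
  ∀ m, IsReduced A m → classCoeff B g m = 0

section classCoeff

open Classical

variable {g h : Ring' k n} {m m' : Mon n}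

theorem classCoeff_eq_sum_of_support_subset {S : Finset (Mon n)} (hS : g.support ⊆ S) :
    classCoeff B g m = ∑ m' ∈ S with SwapEquiv B m' m, coeff m' g := by
  refine Finset.sum_subset (Finset.filter_subset_filter _ hS) fun m' hm'S hm' => ?_
  exact notMem_support_iff.mp fun hm's => hm' (Finset.mem_filter.mpr
    ⟨hm's, (Finset.mem_filter.mp hm'S).2⟩)

theorem classCoeff_add : classCoeff B (g + h) m = classCoeff B g m + classCoeff B h m := by
  rw [classCoeff_eq_sum_of_support_subset (support_add (p := g) (q := h)),
    classCoeff_eq_sum_of_support_subset (Finset.subset_union_left (s₂ := h.support)),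
    classCoeff_eq_sum_of_support_subset (Finset.subset_union_right (s₁ := g.support)),
    ← Finset.sum_add_distrib]
  simp only [coeff_add]

theorem classCoeff_neg : classCoeff B (-g) m = -classCoeff B g m := by
  simp only [classCoeff, support_neg, coeff_neg, Finset.sum_neg_distrib]

theorem classCoeff_congr (h : SwapEquiv B m m') : classCoeff B g m = classCoeff B g m' :=
  Finset.sum_congr (Finset.filter_congr fun _ _ => ⟨(·.trans h), (·.trans h.symm)⟩)
    fun _ _ => rfl

theorem classCoeff_eq_zero (h : ∀ m' ∈ g.support, ¬ SwapEquiv B m' m) : classCoeff B g m = 0 :=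
  Finset.sum_eq_zero fun _ hm' => absurd (Finset.mem_filter.mp hm').2
    (h _ (Finset.mem_filter.mp hm').1)

theorem classCoeff_monomial (s : Mon n) (c : k) :
    classCoeff B (monomial s c) m = if SwapEquiv B s m then c else 0 := by
  rw [classCoeff_eq_sum_of_support_subset support_monomial_subset, Finset.sum_filter,
    Finset.sum_singleton, coeff_monomial, if_pos rfl]

theorem classCoeff_monomial_mul_add (w : Mon n) (c : k) :
    classCoeff B (monomial w c * g) (w + m) = c * classCoeff B g m := by
  rw [classCoeff_eq_sum_of_support_subset (support_monomial_mul_subset w c g), classCoeff,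
    Finset.filter_image, Finset.sum_image fun _ _ _ _ h => add_left_cancel h, Finset.mul_sum]
  refine Finset.sum_congr (Finset.filter_congr fun μ _ => SwapEquiv.add_left_iff) fun μ _ => ?_
  exact coeff_monomial_mul _ _ _ _

end classCoeff

namespace IsBalanced

variable {g h : Ring' k n}

theorem add (hg : IsBalanced A B g) (hh : IsBalanced A B h) : IsBalanced A B (g + h) :=
  fun m hm => by rw [classCoeff_add, hg m hm, hh m hm, add_zero]

theorem monomial_mul (hAB : Disjoint A B) (hg : IsBalanced A B g) (w : Mon n) (c : k) :
    IsBalanced A B (monomial w c * g) := by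
  classical
  intro m hm
  by_cases H : ∃ μ ∈ g.support, SwapEquiv B (w + μ) m
  · obtain ⟨μ, -, hμ⟩ := H
    have hμred : IsReduced A μ := ((hμ.isReduced_iff hAB).mpr hm).mono le_add_self
    rw [← classCoeff_congr hμ, classCoeff_monomial_mul_add, hg μ hμred, mul_zero]
  · push Not at H
    refine classCoeff_eq_zero fun m' hm' => ?_
    obtain ⟨μ, hμ, rfl⟩ := Finset.mem_image.mp (support_monomial_mul_subset w c g hm')
    exact H μ hμ

theorem mul (hAB : Disjoint A B) (hg : IsBalanced A B g) (r : Ring' k n) :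
    IsBalanced A B (r * g) := by
  induction r using MvPolynomial.induction_on' with
  | monomial w c => exact hg.monomial_mul hAB w c
  | add p q hp hq => rw [add_mul]; exact hp.add hq

end IsBalanced

theorem isBalanced_monomial_of_not_isReduced (hAB : Disjoint A B) {s : Mon n}
    (hs : ¬ IsReduced A s) (c : k) : IsBalanced A B (monomial s c) := by
  classical
  intro m hm
  rw [classCoeff_monomial, if_neg fun h => hs ((h.isReduced_iff hAB).mpr hm)]

theorem isBalanced_of_mem [CharP k 2] (hAB : Disjoint A B) {g : Ring' k n}
    (hg : g ∈ frobPow (PAB A B) 2) : IsBalanced A B g := by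
  rw [PAB, frobPow_span] at hg
  induction hg using Submodule.span_induction with
  | mem x hx =>
    obtain ⟨y, ⟨i, hi, rfl | rfl⟩ | ⟨u, hu, v, hv, -, rfl⟩, rfl⟩ := hx <;> dsimp only
    · rw [xv, X_pow_eq_monomial]
      exact isBalanced_monomial_of_not_isReduced hAB (fun h => by simpa using (h i hi).1) 1
    · rw [yv, X_pow_eq_monomial]
      exact isBalanced_monomial_of_not_isReduced hAB (fun h => by simpa using (h i hi).2) 1
    intro m _
    have hs := SwapEquiv.swap hu hv (0 : Mon n)
    simp only [zero_add] at hs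
    rw [fb_sq, sub_eq_add_neg, classCoeff_add, classCoeff_neg, classCoeff_monomial,
      classCoeff_monomial]
    by_cases h : SwapEquiv B (2 • (ex u + ey v)) m
    · rw [if_pos h, if_pos (hs.symm.trans h), add_neg_cancel]
    · rw [if_neg h, if_neg fun h' => h (hs.trans h'), neg_zero, add_zero]
  | zero => exact fun m _ => by simp [classCoeff]
  | add x y _ _ hx hy => exact hx.add hy
  | smul r x _ hx => exact hx.mul hAB r

def swapSetoid (B : Finset (Fin n)) : Setoid (Mon n) :=
  ⟨SwapEquiv B, ⟨.refl, .symm, .trans⟩⟩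

theorem mem_of_isBalanced [CharP k 2] (hAB : Disjoint A B) {g : Ring' k n}
    (hg : IsBalanced A B g) : g ∈ frobPow (PAB A B) 2 := by
  classical
  -- Moving every monomial to a fixed representative `r m` of its class costs an element of `Q`
  -- (`monomial_sub_monomial_mem`); what is left is a sum of class coefficients times monomials.
  let r : Mon n → Mon n := fun m => (Quotient.mk (swapSetoid B) m).out
  have hr : ∀ m, SwapEquiv B (r m) m := fun m => Quotient.mk_out (s := swapSetoid B) m
  have hr_eq : ∀ m m', r m = r m' ↔ SwapEquiv B m m' := fun m m' =>
    ⟨fun h => (hr m).symm.trans (h ▸ hr m'),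
      fun h => congrArg Quotient.out (Quotient.sound (s := swapSetoid B) h)⟩
  have hsplit : g = ∑ m ∈ g.support, (monomial m (coeff m g) - monomial (r m) (coeff m g))
      + ∑ m ∈ g.support, monomial (r m) (coeff m g) := by
    rw [← Finset.sum_add_distrib]
    simpa only [sub_add_cancel] using g.as_sum
  rw [hsplit]
  refine add_mem (Ideal.sum_mem _ fun m _ => ?_) ?_
  · rw [← mul_one (coeff m g), ← C_mul_monomial, ← C_mul_monomial, ← mul_sub]
    exact Ideal.mul_mem_left _ _ (monomial_sub_monomial_mem (hr m).symm)
  rw [← Finset.sum_fiberwise_of_maps_to fun m hm => Finset.mem_image_of_mem r hm]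
  refine Ideal.sum_mem _ fun ρ hρ => ?_
  obtain ⟨m₀, -, rfl⟩ := Finset.mem_image.mp hρ
  have hclass : ∑ m ∈ g.support with r m = r m₀, monomial (r m) (coeff m g)
      = monomial (r m₀) (classCoeff B g m₀) := by
    rw [classCoeff, map_sum]
    exact Finset.sum_congr (Finset.filter_congr fun m _ => hr_eq m m₀)
      fun m hm => by rw [(hr_eq m m₀).mpr (Finset.mem_filter.mp hm).2]
  rw [hclass]
  by_cases hm₀ : IsReduced A m₀
  · rw [hg m₀ hm₀, monomial_zero]
    exact zero_mem _
  · exact monomial_mem_of_not_isReduced (mt ((hr m₀).isReduced_iff hAB).mp hm₀) _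

theorem mem_iff_isBalanced [CharP k 2] (hAB : Disjoint A B) {g : Ring' k n} :
    g ∈ frobPow (PAB A B) 2 ↔ IsBalanced A B g :=
  ⟨isBalanced_of_mem hAB, mem_of_isBalanced hAB⟩

section Consequences

variable [CharP k 2] {g : Ring' k n}

theorem mem_of_monomial_mul_mem (hAB : Disjoint A B) {w : Mon n}
    (hw : ∀ i ∈ A, w (.inl i) = 0 ∧ w (.inr i) = 0)
    (h : monomial w 1 * g ∈ frobPow (PAB A B) 2) : g ∈ frobPow (PAB A B) 2 := by
  rw [mem_iff_isBalanced hAB] at h ⊢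
  intro m hm
  have hwm : IsReduced A (w + m) := fun i hi => by
    simpa [(hw i hi).1, (hw i hi).2] using hm i hi
  simpa [classCoeff_monomial_mul_add] using h (w + m) hwm

theorem mem_of_xv_mul_mem (hAB : Disjoint A B) {i : Fin n} (hi : i ∉ A)
    (h : xv i * g ∈ frobPow (PAB A B) 2) : g ∈ frobPow (PAB A B) 2 :=
  mem_of_monomial_mul_mem hAB (w := ex i)
    (fun j hj => by simp [(ne_of_mem_of_not_mem hj hi).symm]) h

theorem mem_of_yv_mul_mem (hAB : Disjoint A B) {i : Fin n} (hi : i ∉ A)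
    (h : yv i * g ∈ frobPow (PAB A B) 2) : g ∈ frobPow (PAB A B) 2 :=
  mem_of_monomial_mul_mem hAB (w := ey i)
    (fun j hj => by simp [(ne_of_mem_of_not_mem hj hi).symm]) h

theorem mem_of_xv_mul_yv_mul_mem (hAB : Disjoint A B) {i j : Fin n} (hi : i ∉ A) (hj : j ∉ A)
    (h : xv i * yv j * g ∈ frobPow (PAB A B) 2) : g ∈ frobPow (PAB A B) 2 :=
  mem_of_yv_mul_mem hAB hj (mem_of_xv_mul_mem hAB hi (by rwa [← mul_assoc]))

theorem mem_of_mem_insert {i : Fin n} (hAB : Disjoint (insert i A) B)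
    (hg : ∀ m ∈ g.support, m (.inl i) ≤ 1 ∧ m (.inr i) ≤ 1)
    (h : g ∈ frobPow (PAB (insert i A) B) 2) : g ∈ frobPow (PAB A B) 2 := by
  rw [mem_iff_isBalanced hAB] at h
  rw [mem_iff_isBalanced (hAB.mono_left (Finset.subset_insert i A))]
  intro m hm
  by_cases hmi : m (.inl i) ≤ 1 ∧ m (.inr i) ≤ 1
  · exact h m (Finset.forall_mem_insert _ _ _ |>.mpr ⟨hmi, hm⟩)
  refine classCoeff_eq_zero fun m' hm' hequiv => hmi ?_
  have hiB := Finset.disjoint_left.mp hAB (Finset.mem_insert_self i A)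
  rw [← hequiv.inl_eq i hiB, ← hequiv.inr_eq i hiB]
  exact hg m' hm'

end Consequences

section Grading

section Weight

variable {M : Type*} [AddCommMonoid M] (w : Fin n ⊕ Fin n → M)

theorem isWeightedHomogeneous_xv_mul_yv (i j : Fin n) :
    IsWeightedHomogeneous w (xv i * yv j : Ring' k n) (w (.inl i) + w (.inr j)) :=
  (isWeightedHomogeneous_X k w _).mul (isWeightedHomogeneous_X k w _)

section

attribute [local instance] weightedGradedAlgebra

theorem isHomogeneous_frobPow_PAB [CharP k 2] [DecidableEq M]
    (hw : ∀ u ∈ B, w (.inl u) = 0 ∧ w (.inr u) = 0) :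
    (frobPow (PAB (k := k) A B) 2).IsHomogeneous (weightedHomogeneousSubmodule k w) := by
  rw [PAB, frobPow_span]
  refine Ideal.homogeneous_span _ _ ?_
  rintro _ ⟨x, hx, rfl⟩
  suffices ∃ d, IsWeightedHomogeneous w x d from
    let ⟨d, hd⟩ := this; ⟨2 • d, by simpa using hd.pow 2⟩
  obtain ⟨i, -, rfl | rfl⟩ | ⟨u, hu, v, hv, -, rfl⟩ := hx
  · exact ⟨_, isWeightedHomogeneous_X k w _⟩
  · exact ⟨_, isWeightedHomogeneous_X k w _⟩
  · refine ⟨0, (mem_weightedHomogeneousSubmodule k w 0 _).mp (sub_mem ?_ ?_)⟩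
    · simpa [(hw u hu).1, (hw v hv).2] using isWeightedHomogeneous_xv_mul_yv w u v
    · simpa [(hw u hu).2, (hw v hv).1] using isWeightedHomogeneous_xv_mul_yv w v u

end

variable [CharP k 2] {g : Ring' k n}

theorem weightedHomogeneousComponent_mem_frobPow_PAB
    (hw : ∀ u ∈ B, w (.inl u) = 0 ∧ w (.inr u) = 0) (hg : g ∈ frobPow (PAB A B) 2) (d : M) :
    weightedHomogeneousComponent w d g ∈ frobPow (PAB A B) 2 := by
  classical
  exact weightedHomogeneousComponent_mem_of_mem k w (isHomogeneous_frobPow_PAB w hw) hg d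

theorem mem_frobPow_PAB_of_weightedHomogeneousComponent_mem
    (hw : ∀ u ∈ B, w (.inl u) = 0 ∧ w (.inr u) = 0)
    (h : ∀ d, weightedHomogeneousComponent w d g ∈ frobPow (PAB A B) 2) :
    g ∈ frobPow (PAB A B) 2 := by
  classical
  exact (mem_iff_weightedHomogeneousComponent_mem k w (isHomogeneous_frobPow_PAB w hw) g).mpr h

end Weight

theorem mem_of_fb_mul_mem [CharP k 2] {g : Ring' k n} (hAB : Disjoint A B) {b e : Fin n}
    (hbA : b ∉ A) (hbB : b ∉ B) (heA : e ∉ A) (hbe : b ≠ e) (h : fb b e * g ∈ frobPow (PAB A B) 2) :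
    g ∈ frobPow (PAB A B) 2 := by
  classical
  let w : Fin n ⊕ Fin n → ℕ := Pi.single (.inl b) 1
  have hw : ∀ u ∈ B, w (.inl u) = 0 ∧ w (.inr u) = 0 := fun u hu => by
    simp [w, ne_of_mem_of_not_mem hu hbB]
  have hbe' : IsWeightedHomogeneous w (xv b * yv e : Ring' k n) 1 := by
    simpa [w] using isWeightedHomogeneous_xv_mul_yv (k := k) w b e
  have heb' : IsWeightedHomogeneous w (xv e * yv b : Ring' k n) 0 := by
    simpa [w, hbe.symm] using isWeightedHomogeneous_xv_mul_yv (k := k) w e b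
  have hcomp := weightedHomogeneousComponent_mem_frobPow_PAB w hw h
  simp only [fb, sub_mul, map_sub] at hcomp
  -- the `(d + 1)`-component of `f_{b,e} g` is `x_b y_e g_d - x_e y_b g_{d+1}`: induct on `d`
  refine mem_frobPow_PAB_of_weightedHomogeneousComponent_mem w hw fun d => ?_
  induction d with
  | zero =>
    have h0 := hcomp 0
    rw [weightedHomogeneousComponent_mul_of_not_le hbe' (by simp),
      weightedHomogeneousComponent_mul_of_add_eq heb' (zero_add 0), zero_sub, neg_mem_iff] at h0
    exact mem_of_xv_mul_yv_mul_mem hAB heA hbA h0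
  | succ d ih =>
    have h1 := hcomp (d + 1)
    rw [weightedHomogeneousComponent_mul_of_add_eq hbe' (add_comm 1 d),
      weightedHomogeneousComponent_mul_of_add_eq heb' (zero_add _),
      Submodule.sub_mem_iff_right _ (Ideal.mul_mem_left _ _ ih)] at h1
    exact mem_of_xv_mul_yv_mul_mem hAB heA hbA h1

def biWeight (i : Fin n) : Fin n ⊕ Fin n → ℕ × ℕ :=
  Sum.elim (Pi.single i (1, 0)) (Pi.single i (0, 1))

theorem weight_biWeight (i : Fin n) (m : Mon n) :
    Finsupp.weight (biWeight i) m = (m (.inl i), m (.inr i)) := by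
  simp [biWeight, Finsupp.weight_eq_sum, Fintype.sum_sum_type, Pi.single_apply, Prod.ext_iff]

variable {i : Fin n} {d : ℕ × ℕ} {p : Ring' k n}

theorem biWeight_inl_inr_of_notMem (hiB : i ∉ B) :
    ∀ u ∈ B, biWeight i (.inl u) = 0 ∧ biWeight i (.inr u) = 0 := fun u hu => by
  simp [biWeight, ne_of_mem_of_not_mem hu hiB]

theorem inl_inr_eq_of_mem_support (h : IsWeightedHomogeneous (biWeight i) p d)
    {m : Mon n} (hm : m ∈ p.support) : (m (.inl i), m (.inr i)) = d := by
  rw [← weight_biWeight]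
  exact h (mem_support_iff.mp hm)

theorem xv_mul_yv_dvd (h : IsWeightedHomogeneous (biWeight i) p (1, 1)) : xv i * yv i ∣ p := by
  rw [xv_mul_yv]
  refine monomial_one_dvd_of_forall_le fun m hm => ?_
  have := inl_inr_eq_of_mem_support h hm
  simp only [Prod.mk.injEq] at this
  rintro (j | j) <;> by_cases hj : i = j <;> simp [hj] <;> grind

theorem weightedHomogeneousComponent_biWeight_mem_of_not_le (hi : i ∈ A) (hd : ¬ d ≤ (1, 1))
    (g : Ring' k n) : weightedHomogeneousComponent (biWeight i) d g ∈ frobPow (PAB A B) 2 := by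
  rw [as_sum (weightedHomogeneousComponent _ d g)]
  refine Ideal.sum_mem _ fun m hm => monomial_mem_of_not_isReduced (fun hred => hd ?_) _
  rw [← inl_inr_eq_of_mem_support (weightedHomogeneousComponent_isWeightedHomogeneous d g) hm]
  exact Prod.mk_le_mk.mpr (hred i hi)

theorem isWeightedHomogeneous_biWeight_xv_mul_yv (i j l : Fin n) :
    IsWeightedHomogeneous (biWeight i) (xv j * yv l : Ring' k n)
      (if j = i then 1 else 0, if l = i then 1 else 0) := by
  convert isWeightedHomogeneous_xv_mul_yv (k := k) (biWeight i) j l using 1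
  simp only [biWeight, Sum.elim_inl, Sum.elim_inr, Pi.single_apply]
  split_ifs <;> rfl

theorem isWeightedHomogeneous_biWeight_fb {j l : Fin n} (hj : j ≠ i) (hl : l ≠ i) :
    IsWeightedHomogeneous (biWeight i) (fb j l : Ring' k n) (0, 0) :=
  (mem_weightedHomogeneousSubmodule k _ _ _).mp <| sub_mem
    (by simpa [hj, hl] using isWeightedHomogeneous_biWeight_xv_mul_yv (k := k) i j l)
    (by simpa [hj, hl] using isWeightedHomogeneous_biWeight_xv_mul_yv (k := k) i l j)

theorem weightedHomogeneousComponent_fb_mul_one_zero {j : Fin n} (hj : j ≠ i) (g : Ring' k n) :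
    weightedHomogeneousComponent (biWeight i) (1, 0) (fb i j * g)
      = xv i * yv j * weightedHomogeneousComponent (biWeight i) (0, 0) g := by
  rw [fb, sub_mul, map_sub,
    weightedHomogeneousComponent_mul_of_add_eq (j := (0, 0)) (d := (1, 0))
      (by simpa [hj] using isWeightedHomogeneous_biWeight_xv_mul_yv (k := k) i i j) rfl,
    weightedHomogeneousComponent_mul_of_not_le
      (by simpa [hj] using isWeightedHomogeneous_biWeight_xv_mul_yv (k := k) i j i) (by decide),
    sub_zero]

theorem weightedHomogeneousComponent_fb_mul_one_one {j : Fin n} (hj : j ≠ i) (g : Ring' k n) :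
    weightedHomogeneousComponent (biWeight i) (1, 1) (fb i j * g)
      = xv i * yv j * weightedHomogeneousComponent (biWeight i) (0, 1) g
        - xv j * yv i * weightedHomogeneousComponent (biWeight i) (1, 0) g := by
  rw [fb, sub_mul, map_sub,
    weightedHomogeneousComponent_mul_of_add_eq (j := (0, 1)) (d := (1, 1))
      (by simpa [hj] using isWeightedHomogeneous_biWeight_xv_mul_yv (k := k) i i j) rfl,
    weightedHomogeneousComponent_mul_of_add_eq (j := (1, 0)) (d := (1, 1))
      (by simpa [hj] using isWeightedHomogeneous_biWeight_xv_mul_yv (k := k) i j i) rfl]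

variable [CharP k 2]

theorem weightedHomogeneousComponent_biWeight_mem_of_mem_insert (hAB : Disjoint (insert i A) B)
    (hd : d ≤ (1, 1)) {g : Ring' k n} (h : g ∈ frobPow (PAB (insert i A) B) 2) :
    weightedHomogeneousComponent (biWeight i) d g ∈ frobPow (PAB A B) 2 := by
  have hiB := Finset.disjoint_left.mp hAB (Finset.mem_insert_self i A)
  refine mem_of_mem_insert hAB (fun m hm => ?_)
    (weightedHomogeneousComponent_mem_frobPow_PAB _ (biWeight_inl_inr_of_notMem hiB) h d)
  rw [← Prod.mk_le_mk,
    inl_inr_eq_of_mem_support (weightedHomogeneousComponent_isWeightedHomogeneous d g) hm]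
  exact hd

theorem sub_weightedHomogeneousComponent_one_one_mem (hAB : Disjoint A B) (hi : i ∈ A)
    {g : Ring' k n}
    (h₀₀ : weightedHomogeneousComponent (biWeight i) (0, 0) g ∈ frobPow (PAB A B) 2)
    (h₁₀ : weightedHomogeneousComponent (biWeight i) (1, 0) g ∈ frobPow (PAB A B) 2)
    (h₀₁ : weightedHomogeneousComponent (biWeight i) (0, 1) g ∈ frobPow (PAB A B) 2) :
    g - weightedHomogeneousComponent (biWeight i) (1, 1) g ∈ frobPow (PAB A B) 2 := by
  classical
  refine mem_frobPow_PAB_of_weightedHomogeneousComponent_mem (biWeight i)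
    (biWeight_inl_inr_of_notMem (Finset.disjoint_left.mp hAB hi)) fun d => ?_
  rw [map_sub, weightedHomogeneousComponent_of_mem (weightedHomogeneousComponent_mem _ g _)]
  by_cases hd : d ≤ (1, 1)
  · obtain ⟨d₁, d₂⟩ := d
    obtain ⟨h₁, h₂⟩ := Prod.mk_le_mk.mp hd
    interval_cases d₁ <;> interval_cases d₂ <;> simp [h₀₀, h₁₀, h₀₁]
  · rw [if_neg (by rintro rfl; exact hd le_rfl), sub_zero]
    exact weightedHomogeneousComponent_biWeight_mem_of_not_le hi hd g

section Step

variable {s : Finset (Fin n)} {b e : Fin n} {g : Ring' k n}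

theorem weightedHomogeneousComponent_zero_zero_mem (hAB : Disjoint (insert i s) B)
    (his : i ∉ s) (hbi : b ≠ i) (hbs : b ∉ s)
    (hb : fb i b * g ∈ frobPow (PAB (insert i s) B) 2) :
    weightedHomogeneousComponent (biWeight i) (0, 0) g ∈ frobPow (PAB s B) 2 := by
  have h := weightedHomogeneousComponent_biWeight_mem_of_mem_insert hAB (d := (1, 0))
    (by decide) hb
  rw [weightedHomogeneousComponent_fb_mul_one_zero hbi] at h
  exact mem_of_xv_mul_yv_mul_mem (hAB.mono_left (Finset.subset_insert i s)) his hbs h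

theorem weightedHomogeneousComponent_one_zero_mem (hAB : Disjoint (insert i s) B)
    (his : i ∉ s) (hbi : b ≠ i) (hbs : b ∉ s) (hbB : b ∉ B) (hei : e ≠ i) (hes : e ∉ s)
    (hbe : b ≠ e) (hb : fb i b * g ∈ frobPow (PAB (insert i s) B) 2)
    (he : fb i e * g ∈ frobPow (PAB (insert i s) B) 2) :
    weightedHomogeneousComponent (biWeight i) (1, 0) g ∈ frobPow (PAB s B) 2 := by
  have hAB' := hAB.mono_left (Finset.subset_insert i s)
  have hb' := weightedHomogeneousComponent_biWeight_mem_of_mem_insert hAB le_rfl hb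
  have he' := weightedHomogeneousComponent_biWeight_mem_of_mem_insert hAB le_rfl he
  rw [weightedHomogeneousComponent_fb_mul_one_one hbi] at hb'
  rw [weightedHomogeneousComponent_fb_mul_one_one hei] at he'
  -- eliminating the `(0, 1)`-component between the two products leaves a multiple of `f_{b,e}`
  have key := sub_mem (Ideal.mul_mem_left _ (yv b) he') (Ideal.mul_mem_left _ (yv e) hb')
  refine mem_of_yv_mul_mem hAB' his (mem_of_fb_mul_mem hAB' hbs hbB hes hbe ?_)
  convert key using 1
  simp only [fb]
  ring

theorem weightedHomogeneousComponent_zero_one_mem (hAB : Disjoint (insert i s) B)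
    (his : i ∉ s) (hbi : b ≠ i) (hbs : b ∉ s)
    (h₁₀ : weightedHomogeneousComponent (biWeight i) (1, 0) g ∈ frobPow (PAB s B) 2)
    (hb : fb i b * g ∈ frobPow (PAB (insert i s) B) 2) :
    weightedHomogeneousComponent (biWeight i) (0, 1) g ∈ frobPow (PAB s B) 2 := by
  have hb' := weightedHomogeneousComponent_biWeight_mem_of_mem_insert hAB le_rfl hb
  rw [weightedHomogeneousComponent_fb_mul_one_one hbi,
    Submodule.sub_mem_iff_left _ (Ideal.mul_mem_left _ _ h₁₀)] at hb'
  exact mem_of_xv_mul_yv_mul_mem (hAB.mono_left (Finset.subset_insert i s)) his hbs hb'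

theorem fb_mul_mem_of_xv_mul_yv_mul_eq (hAB : Disjoint (insert i s) B) (his : i ∉ s)
    {δ : Ring' k n} (hδ : xv i * yv i * δ = weightedHomogeneousComponent (biWeight i) (1, 1) g)
    (hg : g - weightedHomogeneousComponent (biWeight i) (1, 1) g
      ∈ frobPow (PAB (insert i s) B) 2)
    {j l : Fin n} (hj : j ≠ i) (hl : l ≠ i) (h : fb j l * g ∈ frobPow (PAB (insert i s) B) 2) :
    fb j l * δ ∈ frobPow (PAB s B) 2 := by
  have heq : xv i * yv i * (fb j l * δ)
      = fb j l * weightedHomogeneousComponent (biWeight i) (1, 1) g := by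
    rw [mul_left_comm, hδ]
  have hmem : xv i * yv i * (fb j l * δ) ∈ frobPow (PAB (insert i s) B) 2 := by
    rw [heq, ← sub_sub_cancel g (weightedHomogeneousComponent _ _ g), mul_sub]
    exact sub_mem h (Ideal.mul_mem_left _ _ hg)
  have hhom : IsWeightedHomogeneous (biWeight i) (xv i * yv i * (fb j l * δ)) (1, 1) := by
    rw [heq]
    exact (isWeightedHomogeneous_biWeight_fb hj hl).mul
      (weightedHomogeneousComponent_isWeightedHomogeneous _ g)
  refine mem_of_xv_mul_yv_mul_mem (hAB.mono_left (Finset.subset_insert i s)) his his ?_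
  rw [← hhom.weightedHomogeneousComponent_same]
  exact weightedHomogeneousComponent_biWeight_mem_of_mem_insert hAB le_rfl hmem

end Step

end Grading

theorem mem_sup_span_omegaA [CharP k 2] {b : Fin n} (hbB : b ∉ B) (hAB : Disjoint A B)
    (hbA : b ∉ A) {g : Ring' k n}
    (hg : ∀ i ∈ A, ∃ e ∉ A, e ≠ b ∧
      fb i b * g ∈ frobPow (PAB A B) 2 ∧ fb i e * g ∈ frobPow (PAB A B) 2) :
    g ∈ frobPow (PAB A B) 2 ⊔ Ideal.span {omegaA A} := by
  induction A using Finset.induction_on generalizing g with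
  | empty => exact Ideal.mem_sup_right (by simp [omegaA])
  | insert i s his ih =>
    simp only [Finset.mem_insert, not_or] at hbA
    obtain ⟨e, heA, heb, hb, he⟩ := hg i (Finset.mem_insert_self i s)
    simp only [Finset.mem_insert, not_or] at heA
    have hsub := frobPow_PAB_mono (k := k) (B := B) (Finset.subset_insert i s)
    have h₀₀ := weightedHomogeneousComponent_zero_zero_mem hAB his hbA.1 hbA.2 hb
    have h₁₀ := weightedHomogeneousComponent_one_zero_mem hAB his hbA.1 hbA.2 hbB heA.1 heA.2
      heb.symm hb he
    have h₀₁ := weightedHomogeneousComponent_zero_one_mem hAB his hbA.1 hbA.2 h₁₀ hb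
    have hq := sub_weightedHomogeneousComponent_one_one_mem hAB (Finset.mem_insert_self i s)
      (hsub h₀₀) (hsub h₁₀) (hsub h₀₁)
    obtain ⟨δ, hδ⟩ := xv_mul_yv_dvd (weightedHomogeneousComponent_isWeightedHomogeneous (1, 1) g)
    have hδ' := ih (hAB.mono_left (Finset.subset_insert i s)) hbA.2 (g := δ) fun j hj => by
      have hji : j ≠ i := ne_of_mem_of_not_mem hj his
      obtain ⟨e', he'A, he'b, hb', he'⟩ := hg j (Finset.mem_insert_of_mem hj)
      simp only [Finset.mem_insert, not_or] at he'A
      exact ⟨e', he'A.2, he'b, fb_mul_mem_of_xv_mul_yv_mul_eq hAB his hδ.symm hq hji hbA.1 hb',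
        fb_mul_mem_of_xv_mul_yv_mul_eq hAB his hδ.symm hq hji he'A.1 he'⟩
    rw [← sub_add_cancel g (weightedHomogeneousComponent (biWeight i) (1, 1) g)]
    refine add_mem (Ideal.mem_sup_left hq) ?_
    rw [hδ]
    obtain ⟨y, hy, z, hz, rfl⟩ := Submodule.mem_sup.mp hδ'
    obtain ⟨r, rfl⟩ := Ideal.mem_span_singleton'.mp hz
    rw [mul_add]
    refine add_mem (Ideal.mem_sup_left (Ideal.mul_mem_left _ _ (hsub hy)))
      (Ideal.mem_sup_right (Ideal.mem_span_singleton'.mpr ⟨r, ?_⟩))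
    rw [omegaA_insert his]
    ring

theorem colon_computation_T_empty_general (k : Type*) [Field k] [CharP k 2] (n : ℕ)
    (a b c : Fin n) (hab : a ≠ b) (hbc : b ≠ c)
    (A B : Finset (Fin n))
    (hA : ∀ i ∈ A, i ≠ a ∧ i ≠ b ∧ i ≠ c)
    (hB : ∀ i ∈ B, i ∉ A ∧ i ≠ b)
    (G : SimpleGraph (Fin n))
    (h1 : ∀ i ∈ A, G.Adj i b)
    (h2 : ∀ i ∈ A, G.Adj i a ∨ G.Adj i c)
    (h3 : ∀ i j : Fin n, G.Adj i j → i ∈ A ∨ j ∈ A) :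
    Submodule.colon (frobPow (PAB (k := k) A B) 2) (beIdeal (k := k) G)
      = frobPow (PAB (k := k) A B) 2 ⊔ Ideal.span {omegaA (k := k) A} := by
  have hAB : Disjoint A B := Finset.disjoint_right.mpr fun i hi => (hB i hi).1
  apply le_antisymm
  · intro g hg
    rw [beIdeal, Ideal.colon_span, Submodule.mem_colon] at hg
    have hfb : ∀ i j, G.Adj i j → fb i j * g ∈ frobPow (PAB A B) 2 := fun i j hij => by
      simpa [mul_comm] using hg _ ⟨i, j, hij, rfl⟩
    refine mem_sup_span_omegaA (fun h => (hB b h).2 rfl) hAB (fun h => (hA b h).2.1 rfl)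
      fun i hi => ?_
    rcases h2 i hi with hia | hic
    · exact ⟨a, fun h => (hA a h).1 rfl, hab, hfb i b (h1 i hi), hfb i a hia⟩
    · exact ⟨c, fun h => (hA c h).2.2 rfl, hbc.symm, hfb i b (h1 i hi), hfb i c hic⟩
  · refine sup_le (fun q hq => Submodule.mem_colon.mpr fun p _ => Ideal.mul_mem_right p _ hq) ?_
    rw [Ideal.span_le, Set.singleton_subset_iff, SetLike.mem_coe, beIdeal, Ideal.colon_span,
      Submodule.mem_colon]
    rintro _ ⟨i, j, hij, rfl⟩
    exact omegaA_mul_fb_mem (h3 i j hij)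

/-- in characteristic `2`, for distinct `a, b, c`,
`A ⊆ {1,…,n}∖{a,b,c}`, `B ⊆ {1,…,n}∖(A ∪ {b})`, and a graph `G` in which every vertex of
`A` is adjacent to `b`, every vertex of `A` is adjacent to `a` or to `c`, and every edge
has an endpoint in `A`, one has `P(A,B)^{[2]} : J_G = P(A,B)^{[2]} + (ω_A)`. -/
theorem colon_computation_T_empty (k : Type*) [Field k] [CharP k 2] (n : ℕ)
    (a b c : Fin n) (hab : a ≠ b) (hbc : b ≠ c) (hac : a ≠ c)
    (A B : Finset (Fin n))
    (hA : ∀ i ∈ A, i ≠ a ∧ i ≠ b ∧ i ≠ c)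
    (hB : ∀ i ∈ B, i ∉ A ∧ i ≠ b)
    (G : SimpleGraph (Fin n))
    (h1 : ∀ i ∈ A, G.Adj i b)
    (h2 : ∀ i ∈ A, G.Adj i a ∨ G.Adj i c)
    (h3 : ∀ i j : Fin n, G.Adj i j → i ∈ A ∨ j ∈ A) :
    Submodule.colon (frobPow (PAB (k := k) A B) 2) (beIdeal (k := k) G)
      = frobPow (PAB (k := k) A B) 2 ⊔ Ideal.span {omegaA (k := k) A} :=
  colon_computation_T_empty_general k n a b c hab hbc A B hA hB G h1 h2 h3

end BEI
end
end

section
/- Let G be a weakly closed finite simple graph and let v be a vertex of G. Then the vertex deletion G∖v, the completion G_v, and the graph G_v∖v (the completion at v with v deleted) are all weakly closed. -/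
noncomputable section

namespace BEI

/-- A finite simple graph `G` is weakly closed if there is a bijective labeling of its
vertices by `1,…,|V(G)|` such that for every edge `{a,b}` with `σ a < σ b` and every
vertex `c` with `σ a < σ c < σ b`, at least one of `{a,c}`, `{c,b}` is an edge of `G`. -/
def WeaklyClosed {V : Type*} [Fintype V] (G : SimpleGraph V) : Prop :=
  ∃ σ : V ≃ Fin (Fintype.card V), ∀ a b c : V,
    G.Adj a b → σ a < σ c → σ c < σ b → (G.Adj a c ∨ G.Adj c b)

/-- The completion `G_v` of `G` at the vertex `v`: all pairs of distinct neighbors of `v`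
are made adjacent. -/
def completion {V : Type*} (G : SimpleGraph V) (v : V) : SimpleGraph V :=
  G ⊔ SimpleGraph.fromRel (fun a b => G.Adj v a ∧ G.Adj v b)

section

variable {V W α : Type*}

def IsWeaklyClosedLabeling [LT α] (G : SimpleGraph V) (ρ : V → α) : Prop :=
  ∀ a b c : V, G.Adj a b → ρ a < ρ c → ρ c < ρ b → G.Adj a c ∨ G.Adj c b

/-- Any injective labeling into a linear order can be replaced by its ranking `V ≃ Fin n`. -/
lemma IsWeaklyClosedLabeling.weaklyClosed [Fintype V] [LinearOrder α]
    {G : SimpleGraph V} {ρ : V → α} (h : IsWeaklyClosedLabeling G ρ)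
    (hρ : Function.Injective ρ) : WeaklyClosed G := by
  let _ : LinearOrder V := LinearOrder.lift' ρ hρ
  let rank : Fin (Fintype.card V) ≃o V := Fintype.orderIsoFinOfCardEq V rfl
  exact ⟨rank.symm.toEquiv, fun a b c hab hac hcb =>
    h a b c hab (rank.symm.lt_iff_lt.mp hac) (rank.symm.lt_iff_lt.mp hcb)⟩

lemma IsWeaklyClosedLabeling.comap [LT α] {G : SimpleGraph V} {ρ : V → α}
    (h : IsWeaklyClosedLabeling G ρ) (f : W → V) : IsWeaklyClosedLabeling (G.comap f) (ρ ∘ f) :=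
  fun a b c => h (f a) (f b) (f c)

lemma WeaklyClosed.comap [Fintype V] [Fintype W] {G : SimpleGraph V}
    (h : WeaklyClosed G) {f : W → V} (hf : Function.Injective f) : WeaklyClosed (G.comap f) := by
  obtain ⟨σ, hσ : IsWeaklyClosedLabeling G σ⟩ := h
  exact (hσ.comap f).weaklyClosed (σ.injective.comp hf)

lemma completion_adj {G : SimpleGraph V} {v a b : V} :
    (completion G v).Adj a b ↔ G.Adj a b ∨ a ≠ b ∧ G.Adj v a ∧ G.Adj v b := by
  simp only [completion, SimpleGraph.sup_adj, SimpleGraph.fromRel_adj]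
  grind [SimpleGraph.Adj.ne]

lemma completion_adj_of_adj {G : SimpleGraph V} {v a b : V} (h : G.Adj a b) :
    (completion G v).Adj a b :=
  completion_adj.mpr (Or.inl h)

lemma completion_adj_of_neighbors {G : SimpleGraph V} {v a b : V} (hab : a ≠ b)
    (ha : G.Adj v a) (hb : G.Adj v b) : (completion G v).Adj a b :=
  completion_adj.mpr (Or.inr ⟨hab, ha, hb⟩)

/-- For a new edge `{a, b}` of the completion, a vertex `c` strictly between them lies between
`a` and `v` or between `v` and `b`, and the old edge `{a, v}` resp. `{v, b}` then gives `c` a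
neighbour among `a, b`, directly or through the completion. -/
lemma IsWeaklyClosedLabeling.completion [LinearOrder α] {G : SimpleGraph V}
    {ρ : V → α} (h : IsWeaklyClosedLabeling G ρ) (hρ : Function.Injective ρ) (v : V) :
    IsWeaklyClosedLabeling (completion G v) ρ := by
  intro a b c hab hac hcb
  rcases completion_adj.mp hab with hab | ⟨-, hva, hvb⟩
  · exact (h a b c hab hac hcb).imp completion_adj_of_adj completion_adj_of_adj
  have hac' : a ≠ c := fun e => hac.ne (congrArg ρ e)
  have hcb' : c ≠ b := fun e => hcb.ne (congrArg ρ e)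
  obtain rfl | hcv := eq_or_ne c v
  · exact Or.inl (completion_adj_of_adj hva.symm)
  rcases (hρ.ne hcv).lt_or_gt with hcv | hvc
  · left
    rcases h a v c hva.symm hac hcv with hac | hcv
    · exact completion_adj_of_adj hac
    · exact completion_adj_of_neighbors hac' hva hcv.symm
  · right
    rcases h v b c hvb hvc hcb with hvc | hcb
    · exact completion_adj_of_neighbors hcb' hvc hvb
    · exact completion_adj_of_adj hcb

lemma WeaklyClosed.completion [Fintype V] {G : SimpleGraph V} (h : WeaklyClosed G)
    (v : V) : WeaklyClosed (completion G v) := by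
  obtain ⟨σ, hσ : IsWeaklyClosedLabeling G σ⟩ := h
  exact (hσ.completion σ.injective v).weaklyClosed σ.injective

end

/-- if `G` is weakly closed and `v` is a vertex of `G`, then the vertex
deletion `G∖v`, the completion `G_v`, and `G_v∖v` are all weakly closed. -/
theorem weaklyClosed_deletion_completion {V : Type*} [Fintype V] [DecidableEq V]
    (G : SimpleGraph V) (v : V) (h : WeaklyClosed G) :
    WeaklyClosed (G.induce {u : V | u ≠ v}) ∧
      WeaklyClosed (completion G v) ∧
        WeaklyClosed ((completion G v).induce {u : V | u ≠ v}) := by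
  exact ⟨h.comap Subtype.val_injective, h.completion v,
    (h.completion v).comap Subtype.val_injective⟩

end BEI
end
end
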